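/- For complex parameters α, β, γ, let A(α,β,γ) be the 5 × 5 complex matrix whose only nonzero entries are A₀₁ = α, A₁₂ = α, A₁₃ = β, A₂₃ = γ, A₃₄ = γ, together with the conjugate entries A₁₀ = conj(α), A₂₁ = conj(α), A₃₁ = conj(β), A₃₂ = conj(γ), A₄₃ = conj(γ). Then A(α,β,γ) is Hermitian for all α, β, γ, and whenever (α,β,γ) ≠ (0,0,0), the number of strictly positive eigenvalues of A(α,β,γ) (counted with multiplicity) equals the number of strictly negative eigenvalues, and this common number is 1 or 2; in particular A(α,β,γ) has eigenvalues of both signs. -/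

import Mathlib

open Matrix

/-- The `5 × 5` Hermitian matrices arising as Levi forms in Example 1 of Section 7. -/
noncomputable def leviMatrix (α β γ : ℂ) : Matrix (Fin 5) (Fin 5) ℂ :=
  !![0, α, 0, 0, 0;
     starRingEnd ℂ α, 0, α, β, 0;
     0, starRingEnd ℂ α, 0, γ, 0;
     0, starRingEnd ℂ β, starRingEnd ℂ γ, 0, γ;
     0, 0, 0, starRingEnd ℂ γ, 0]

/-!
The eigenvalues of `A = leviMatrix α β γ` sum to `tr A = 0`, and they are not all zero.
If `α γ = 0`, then `A` factors through `ℂ²`, so at most two eigenvalues are nonzero, and they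
must be `±λ`. If `α γ ≠ 0`, then `A` is singular; discarding one zero eigenvalue leaves four
reals `ν` with sum `0`, for which `8 ∏ ν = (∑ ν²)² - 2 ∑ ν⁴`. The traces of `A²` and `A⁴` turn
this into `∏ ν = 3 |α|² |γ|² > 0`, and four nonzero reals with positive product and zero sum
have two of each sign.
-/

open Finset

section SignCount

variable {ι : Type*} [Fintype ι] (μ : ι → ℝ)

lemma exists_pos_and_exists_neg_of_sum_eq_zero (hsum : ∑ i, μ i = 0) (hμ : μ ≠ 0) :
    (∃ i, 0 < μ i) ∧ ∃ i, μ i < 0 := by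
  obtain ⟨j, hj⟩ := Function.ne_iff.mp hμ
  obtain ⟨i, -, hi⟩ := exists_pos_of_sum_zero_of_exists_nonzero μ hsum ⟨j, mem_univ j, hj⟩
  have hsum_neg : ∑ i, -μ i = 0 := by rw [sum_neg_distrib, hsum, neg_zero]
  obtain ⟨i', -, hi'⟩ := exists_pos_of_sum_zero_of_exists_nonzero (-μ ·) hsum_neg
    ⟨j, mem_univ j, neg_ne_zero.mpr hj⟩
  exact ⟨⟨i, hi⟩, i', neg_pos.mp hi'⟩

lemma card_pos_eq_one_and_card_neg_eq_one (hsum : ∑ i, μ i = 0) (hμ : μ ≠ 0)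
    (hsupp : #{i | μ i ≠ 0} ≤ 2) : #{i | 0 < μ i} = 1 ∧ #{i | μ i < 0} = 1 := by
  classical
  obtain ⟨⟨i, hi⟩, j, hj⟩ := exists_pos_and_exists_neg_of_sum_eq_zero μ hsum hμ
  have hpos : 0 < #{i | 0 < μ i} := card_pos.mpr ⟨i, by simpa using hi⟩
  have hneg : 0 < #{i | μ i < 0} := card_pos.mpr ⟨j, by simpa using hj⟩
  have hsplit : #{i | 0 < μ i} + #{i | μ i < 0} ≤ #{i | μ i ≠ 0} := by
    rw [← card_union_of_disjoint (disjoint_filter.mpr fun _ _ h h' => h.not_gt h'), ← filter_or]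
    exact card_le_card fun i => by simp only [mem_filter]; grind
  omega

lemma even_card_neg_of_prod_pos (hprod : 0 < ∏ i, μ i) : Even #{i | μ i < 0} := by
  have hsign : ∏ i, μ i = (-1) ^ #{i | μ i < 0} * ∏ i, |μ i| := by
    have hsplit : ∀ i, μ i = (if μ i < 0 then -1 else 1) * |μ i| := fun i => by
      split_ifs with h
      · rw [abs_of_neg h, neg_one_mul, neg_neg]
      · rw [abs_of_nonneg (not_lt.mp h), one_mul]
    rw [prod_congr rfl fun i _ => hsplit i, prod_mul_distrib, prod_ite, prod_const, prod_const_one,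
      mul_one]
  by_contra hodd
  rw [Nat.not_even_iff_odd] at hodd
  rw [hsign, hodd.neg_one_pow, neg_one_mul] at hprod
  exact (neg_pos.mp hprod).not_ge (prod_nonneg fun i _ => abs_nonneg (μ i))

lemma card_pos_eq_two_and_card_neg_eq_two (hcard : Fintype.card ι = 4) (hsum : ∑ i, μ i = 0)
    (hprod : 0 < ∏ i, μ i) : #{i | 0 < μ i} = 2 ∧ #{i | μ i < 0} = 2 := by
  have hne : ∀ i, μ i ≠ 0 := fun i => prod_ne_zero_iff.mp hprod.ne' i (mem_univ i)
  obtain ⟨i₀⟩ : Nonempty ι := Fintype.card_pos_iff.mp (by omega)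
  obtain ⟨⟨i, hi⟩, j, hj⟩ :=
    exists_pos_and_exists_neg_of_sum_eq_zero μ hsum fun h => hne i₀ (congrFun h i₀)
  have hpos : 0 < #{i | 0 < μ i} := card_pos.mpr ⟨i, by simpa using hi⟩
  have hneg : 0 < #{i | μ i < 0} := card_pos.mpr ⟨j, by simpa using hj⟩
  have htotal : #{i | 0 < μ i} + #{i | μ i < 0} = 4 := by
    have hneg_eq : #{i | μ i < 0} = #{i | ¬ 0 < μ i} :=
      congrArg card <| filter_congr fun i _ => by
        rw [not_lt, lt_iff_le_and_ne, and_iff_left (hne i)]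
    rw [hneg_eq, card_filter_add_card_filter_not, card_univ, hcard]
  obtain ⟨r, hr⟩ := even_card_neg_of_prod_pos μ hprod
  omega

end SignCount

lemma Fin.card_filter_univ_succAbove_of_not {n : ℕ} (p : Fin (n + 1) → Prop) [DecidablePred p]
    (i : Fin (n + 1)) (hi : ¬ p i) : #{j | p j} = #{j | p (i.succAbove j)} := by
  simp only [card_filter, Fin.sum_univ_succAbove _ i, hi, if_false, zero_add]

lemma eight_mul_prod_eq_of_sum_eq_zero (ν : Fin 4 → ℝ) (hsum : ∑ i, ν i = 0) :
    8 * ∏ i, ν i = (∑ i, ν i ^ 2) ^ 2 - 2 * ∑ i, ν i ^ 4 := by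
  simp only [Fin.sum_univ_four, Fin.prod_univ_four] at *
  rw [show ν 3 = -(ν 0 + ν 1 + ν 2) by linarith]
  ring

lemma Matrix.IsHermitian.trace_pow_eq_sum_eigenvalues_pow {𝕜 n : Type*} [RCLike 𝕜] [Fintype n]
    [DecidableEq n] {A : Matrix n n 𝕜} (hA : A.IsHermitian) (m : ℕ) :
    (A ^ m).trace = ((∑ i, hA.eigenvalues i ^ m : ℝ) : 𝕜) := by
  conv_lhs => rw [hA.spectral_theorem, ← map_pow, Unitary.conjStarAlgAut_apply, trace_mul_cycle,
    Unitary.coe_star_mul_self, one_mul, diagonal_pow, trace_diagonal]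
  simp

section LeviMatrix

lemma leviMatrix_isHermitian (α β γ : ℂ) : (leviMatrix α β γ).IsHermitian := by
  ext i j
  fin_cases i <;> fin_cases j <;> simp [leviMatrix]

lemma leviMatrix_det (α β γ : ℂ) : (leviMatrix α β γ).det = 0 := by
  simp [leviMatrix, det_succ_row_zero, Fin.sum_univ_succ, Fin.succAbove]

lemma leviMatrix_trace (α β γ : ℂ) : (leviMatrix α β γ).trace = 0 := by
  simp [leviMatrix, trace, Fin.sum_univ_five]

lemma leviMatrix_trace_sq (α β γ : ℂ) :
    (leviMatrix α β γ ^ 2).trace =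
      ((2 * (2 * Complex.normSq α + Complex.normSq β + 2 * Complex.normSq γ) : ℝ) : ℂ) := by
  simp [leviMatrix, trace, sq, Fin.sum_univ_five, Complex.normSq_eq_conj_mul_self]
  ring

lemma leviMatrix_trace_pow_four (α β γ : ℂ) :
    (leviMatrix α β γ ^ 4).trace =
      ((2 * (2 * Complex.normSq α + Complex.normSq β + 2 * Complex.normSq γ) ^ 2
        - 12 * Complex.normSq α * Complex.normSq γ : ℝ) : ℂ) := by
  rw [show 4 = 2 * 2 from rfl, pow_mul]
  simp [leviMatrix, trace, sq, Fin.sum_univ_five, Complex.normSq_eq_conj_mul_self]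
  ring

variable {α β γ : ℂ}

lemma leviMatrix_eq_zero_iff : leviMatrix α β γ = 0 ↔ (α, β, γ) = (0, 0, 0) := by
  constructor
  · intro h
    have hα := congrFun (congrFun h 0) 1
    have hβ := congrFun (congrFun h 1) 3
    have hγ := congrFun (congrFun h 2) 3
    simp_all [leviMatrix]
  · intro h
    simp only [Prod.mk.injEq] at h
    obtain ⟨rfl, rfl, rfl⟩ := h
    ext i j
    fin_cases i <;> fin_cases j <;> simp [leviMatrix]

lemma leviMatrix_rank_le_two (h : α = 0 ∨ γ = 0) : (leviMatrix α β γ).rank ≤ 2 := by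
  rcases h with rfl | rfl
  · rw [show leviMatrix 0 β γ = !![0, 0; 0, β; 0, γ; 1, 0; 0, starRingEnd ℂ γ] *
        !![0, starRingEnd ℂ β, starRingEnd ℂ γ, 0, γ; 0, 0, 0, 1, 0] by
      ext i j; fin_cases i <;> fin_cases j <;> simp [leviMatrix, mul_apply, Fin.sum_univ_two]]
    exact (rank_mul_le_left _ _).trans (rank_le_width _)
  · rw [show leviMatrix α β 0 = !![α, 0; 0, 1; starRingEnd ℂ α, 0; starRingEnd ℂ β, 0; 0, 0] *
        !![0, 1, 0, 0, 0; starRingEnd ℂ α, 0, α, β, 0] by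
      ext i j; fin_cases i <;> fin_cases j <;> simp [leviMatrix, mul_apply, Fin.sum_univ_two]]
    exact (rank_mul_le_left _ _).trans (rank_le_width _)

variable (hA : (leviMatrix α β γ).IsHermitian)

lemma leviMatrix_sum_eigenvalues : ∑ i, hA.eigenvalues i = 0 := by
  have h := hA.trace_eq_sum_eigenvalues
  rwa [← RCLike.ofReal_sum, leviMatrix_trace, eq_comm, RCLike.ofReal_eq_zero] at h

lemma leviMatrix_eigenvalues_ne_zero (hne : (α, β, γ) ≠ (0, 0, 0)) : hA.eigenvalues ≠ 0 := by
  rwa [Ne, hA.eigenvalues_eq_zero_iff, leviMatrix_eq_zero_iff]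

lemma leviMatrix_card_pos_eq_one (h : α = 0 ∨ γ = 0) (hne : (α, β, γ) ≠ (0, 0, 0)) :
    #{i | 0 < hA.eigenvalues i} = 1 ∧ #{i | hA.eigenvalues i < 0} = 1 := by
  refine card_pos_eq_one_and_card_neg_eq_one _ (leviMatrix_sum_eigenvalues hA)
    (leviMatrix_eigenvalues_ne_zero hA hne) ?_
  rw [← Fintype.card_subtype, ← hA.rank_eq_card_non_zero_eigs]
  exact leviMatrix_rank_le_two h

lemma leviMatrix_exists_eigenvalues_eq_zero : ∃ i, hA.eigenvalues i = 0 := by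
  have h := hA.det_eq_prod_eigenvalues
  rw [leviMatrix_det, eq_comm, prod_eq_zero_iff] at h
  obtain ⟨i, -, hi⟩ := h
  exact ⟨i, by simpa using hi⟩

lemma leviMatrix_sum_eigenvalues_sq : ∑ i, hA.eigenvalues i ^ 2 =
    2 * (2 * Complex.normSq α + Complex.normSq β + 2 * Complex.normSq γ) :=
  Complex.ofReal_injective
    ((hA.trace_pow_eq_sum_eigenvalues_pow 2).symm.trans (leviMatrix_trace_sq α β γ))

lemma leviMatrix_sum_eigenvalues_pow_four : ∑ i, hA.eigenvalues i ^ 4 =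
    2 * (2 * Complex.normSq α + Complex.normSq β + 2 * Complex.normSq γ) ^ 2
      - 12 * Complex.normSq α * Complex.normSq γ :=
  Complex.ofReal_injective
    ((hA.trace_pow_eq_sum_eigenvalues_pow 4).symm.trans (leviMatrix_trace_pow_four α β γ))

lemma leviMatrix_card_pos_eq_two (hα : α ≠ 0) (hγ : γ ≠ 0) :
    #{i | 0 < hA.eigenvalues i} = 2 ∧ #{i | hA.eigenvalues i < 0} = 2 := by
  obtain ⟨i₀, hi₀⟩ := leviMatrix_exists_eigenvalues_eq_zero hA
  set ν : Fin 4 → ℝ := fun j => hA.eigenvalues (i₀.succAbove j)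
  have hpow : ∀ m ≠ 0, ∑ i, hA.eigenvalues i ^ m = ∑ j, ν j ^ m := fun m hm => by
    rw [Fin.sum_univ_succAbove _ i₀, hi₀, zero_pow hm, zero_add]
  have hsum : ∑ j, ν j = 0 := by
    simpa only [pow_one, leviMatrix_sum_eigenvalues hA, eq_comm] using hpow 1 one_ne_zero
  have hprod : ∏ j, ν j = 3 * Complex.normSq α * Complex.normSq γ := by
    have h := eight_mul_prod_eq_of_sum_eq_zero ν hsum
    rw [← hpow 2 two_ne_zero, ← hpow 4 four_ne_zero, leviMatrix_sum_eigenvalues_sq hA,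
      leviMatrix_sum_eigenvalues_pow_four hA] at h
    linear_combination h / 8
  have hprod_pos : 0 < ∏ j, ν j := by
    rw [hprod]
    have := Complex.normSq_pos.mpr hα
    have := Complex.normSq_pos.mpr hγ
    positivity
  rw [Fin.card_filter_univ_succAbove_of_not _ i₀ (by simp [hi₀]),
    Fin.card_filter_univ_succAbove_of_not _ i₀ (by simp [hi₀])]
  exact card_pos_eq_two_and_card_neg_eq_two ν (Fintype.card_fin 4) hsum hprod_pos

end LeviMatrix

/-- `leviMatrix α β γ` is Hermitian for all `α, β, γ`, and whenever
`(α, β, γ) ≠ (0, 0, 0)`, the number of strictly positive eigenvalues (with multiplicity)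
equals the number of strictly negative eigenvalues, this common number is `1` or `2`,
and in particular there are eigenvalues of both signs. -/
theorem leviMatrix_signature (α β γ : ℂ) :
    ∃ hA : (leviMatrix α β γ).IsHermitian,
      ((α, β, γ) ≠ (0, 0, 0) →
        (Finset.univ.filter fun i => 0 < hA.eigenvalues i).card =
            (Finset.univ.filter fun i => hA.eigenvalues i < 0).card ∧
        ((Finset.univ.filter fun i => 0 < hA.eigenvalues i).card = 1 ∨
          (Finset.univ.filter fun i => 0 < hA.eigenvalues i).card = 2) ∧
        (∃ i, 0 < hA.eigenvalues i) ∧ (∃ i, hA.eigenvalues i < 0)) := by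
  refine ⟨leviMatrix_isHermitian α β γ, fun hne => ?_⟩
  set hA := leviMatrix_isHermitian α β γ
  have hcard : #{i | 0 < hA.eigenvalues i} = #{i | hA.eigenvalues i < 0} ∧
      (#{i | 0 < hA.eigenvalues i} = 1 ∨ #{i | 0 < hA.eigenvalues i} = 2) := by
    by_cases hαγ : α = 0 ∨ γ = 0
    · obtain ⟨hpos, hneg⟩ := leviMatrix_card_pos_eq_one hA hαγ hne
      exact ⟨hpos.trans hneg.symm, Or.inl hpos⟩
    · obtain ⟨hα, hγ⟩ := not_or.mp hαγ
      obtain ⟨hpos, hneg⟩ := leviMatrix_card_pos_eq_two hA hα hγ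
      exact ⟨hpos.trans hneg.symm, Or.inr hpos⟩
  exact ⟨hcard.1, hcard.2, exists_pos_and_exists_neg_of_sum_eq_zero _
    (leviMatrix_sum_eigenvalues hA) (leviMatrix_eigenvalues_ne_zero hA hne)⟩
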